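/- arXiv:2111.15299 — 2 statements merged into one kernel-verified Lean document; each statement's English description precedes it below -/
import Mathlib

section
/- Let P : C^op → InfSL be an elementary existential doctrine with full weak comprehension and comprehensive diagonals (a variational doctrine). Then every monomorphism m : X → A in C is P-injective, i.e. P(m×m)(δ_A) = δ_X. -/
/-!
With full comprehension a predicate `α` is determined by the arrows `k` with `P(k)(α) = ⊤`.
Comprehensive diagonals identify these arrows for `δ_X` as those with `k ≫ π₁ = k ≫ π₂`, and
for `P(m×m)(δ_A)` as those with `k ≫ π₁ ≫ m = k ≫ π₂ ≫ m`; the two conditions agree as `m` is monic.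
-/

open CategoryTheory CategoryTheory.Limits Opposite

noncomputable section

universe w v u

namespace DoctrinePaper

variable {C : Type u} [Category.{v} C] [HasFiniteProducts C]

/-- The fiber of a primary doctrine `P : Cᵒᵖ ⥤ SemilatInfCat` over an object `A`. -/
abbrev Fib (P : Cᵒᵖ ⥤ SemilatInfCat.{w}) (A : C) : Type w :=
  ↥(P.obj (op A))

/-- Reindexing along an arrow `f : A ⟶ B`. -/
def rmap (P : Cᵒᵖ ⥤ SemilatInfCat.{w}) {A B : C} (f : A ⟶ B) :
    Fib P B → Fib P A :=
  fun x => (P.map f.op) x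

variable (P : Cᵒᵖ ⥤ SemilatInfCat.{w})

/-- An elementary doctrine: fibered equalities `δ A ∈ P (A ⨯ A)` such that
`E_e(α) = P⟨pr1,pr2⟩(α) ⊓ P⟨pr2,pr3⟩(δ A)` is left adjoint to reindexing along
`e = ⟨pr1,pr2,pr2⟩ : X ⨯ A ⟶ (X ⨯ A) ⨯ A`. -/
structure IsElementary where
  δ : ∀ A : C, Fib P (A ⨯ A)
  adj :
    ∀ (X A : C) (α : Fib P (X ⨯ A)) (β : Fib P ((X ⨯ A) ⨯ A)),
      (rmap P (prod.fst : (X ⨯ A) ⨯ A ⟶ X ⨯ A) α ⊓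
          rmap P (prod.lift (prod.fst ≫ prod.snd) prod.snd : (X ⨯ A) ⨯ A ⟶ A ⨯ A) (δ A) ≤ β)
        ↔ α ≤ rmap P (prod.lift (𝟙 (X ⨯ A)) prod.snd : X ⨯ A ⟶ (X ⨯ A) ⨯ A) β

/-- A `P`-equivalence relation over `A`. -/
structure IsEqRel (hE : IsElementary P) {A : C} (ρ : Fib P (A ⨯ A)) : Prop where
  refl : hE.δ A ≤ ρ
  symm : ρ = rmap P (prod.lift prod.snd prod.fst : A ⨯ A ⟶ A ⨯ A) ρ
  trans :
    rmap P (prod.fst : (A ⨯ A) ⨯ A ⟶ A ⨯ A) ρ ⊓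
        rmap P (prod.lift (prod.fst ≫ prod.snd) prod.snd : (A ⨯ A) ⨯ A ⟶ A ⨯ A) ρ ≤
      rmap P (prod.lift (prod.fst ≫ prod.fst) prod.snd : (A ⨯ A) ⨯ A ⟶ A ⨯ A) ρ

/-- An elementary existential doctrine, together with the induced left adjoints
`∃_f` along all arrows, satisfying the adjunction law, Frobenius reciprocity, and
the Beck–Chevalley condition along pullbacks of projections. -/
structure IsExistential extends IsElementary P where
  E : ∀ {A B : C}, (A ⟶ B) → Fib P A → Fib P B
  adjE : ∀ {A B : C} (f : A ⟶ B) (α : Fib P A) (β : Fib P B),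
    E f α ≤ β ↔ α ≤ rmap P f β
  frobenius : ∀ {A B : C} (f : A ⟶ B) (α : Fib P A) (β : Fib P B),
    E f (α ⊓ rmap P f β) = E f α ⊓ β
  beckChevalley : ∀ {B A A' : C} (f : A' ⟶ A) (β : Fib P (B ⨯ A)),
    E (prod.snd : B ⨯ A' ⟶ A') (rmap P (prod.map (𝟙 B) f) β) =
      rmap P f (E (prod.snd : B ⨯ A ⟶ A) β)

/-- Descent data for a relation `ρ` over `A`. -/
def Des {A : C} (ρ : Fib P (A ⨯ A)) : Set (Fib P A) :=
  {α | rmap P (prod.fst : A ⨯ A ⟶ A) α ⊓ ρ ≤ rmap P (prod.snd : A ⨯ A ⟶ A) α}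

/-- Comprehensive diagonals: `f = g` iff `⊤ = P⟨f,g⟩(δ)`. -/
def ComprehensiveDiagonals (hE : IsElementary P) : Prop :=
  ∀ {X A : C} (f g : X ⟶ A), f = g ↔ rmap P (prod.lift f g) (hE.δ A) = ⊤

/-- (Weak) comprehension structure. -/
structure Comprehension where
  cObj : ∀ {A : C}, Fib P A → C
  cArr : ∀ {A : C} (α : Fib P A), cObj α ⟶ A
  cTop : ∀ {A : C} (α : Fib P A), rmap P (cArr α) α = ⊤
  cUniv : ∀ {A : C} (α : Fib P A) {Y : C} (f : Y ⟶ A),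
    rmap P f α = ⊤ → ∃ k : Y ⟶ cObj α, k ≫ cArr α = f

/-- Full comprehension. -/
def Comprehension.Full (hC : Comprehension P) : Prop :=
  ∀ {A : C} (α β : Fib P A), α ≤ β ↔ rmap P (hC.cArr α) β = ⊤

/-- Strong comprehension: comprehension arrows are monic. -/
def Comprehension.Strong (hC : Comprehension P) : Prop :=
  ∀ {A : C} (α : Fib P A), Mono (hC.cArr α)

/-- `P`-injective arrow. -/
def PInj (hE : IsElementary P) {X A : C} (f : X ⟶ A) : Prop :=
  rmap P (prod.map f f) (hE.δ A) = hE.δ X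

/-- `P`-surjective arrow. -/
def PSurj (hEx : IsExistential P) {X A : C} (f : X ⟶ A) : Prop :=
  hEx.E f (⊤ : Fib P X) = ⊤

/-- The product relation `ρ ⊠ σ` on `(A ⨯ B) ⨯ (A ⨯ B)`. -/
def boxprod {A B : C} (ρ : Fib P (A ⨯ A)) (σ : Fib P (B ⨯ B)) :
    Fib P ((A ⨯ B) ⨯ (A ⨯ B)) :=
  rmap P (prod.map prod.fst prod.fst) ρ ⊓ rmap P (prod.map prod.snd prod.snd) σ

omit [HasFiniteProducts C] in
lemma rmap_comp {A B D : C} (f : A ⟶ B) (g : B ⟶ D) (x : Fib P D) :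
    rmap P (f ≫ g) x = rmap P f (rmap P g x) := by
  simp only [rmap, op_comp, P.map_comp]
  rfl

omit [HasFiniteProducts C] in
lemma Comprehension.le_of_forall_rmap_eq_top (hC : Comprehension P) (hfull : hC.Full P)
    {A : C} {α β : Fib P A}
    (h : ∀ {Y : C} (k : Y ⟶ A), rmap P k α = ⊤ → rmap P k β = ⊤) : α ≤ β :=
  (hfull α β).mpr (h _ (hC.cTop α))

omit [HasFiniteProducts C] in
lemma Comprehension.eq_of_forall_rmap_eq_top_iff (hC : Comprehension P) (hfull : hC.Full P)
    {A : C} {α β : Fib P A}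
    (h : ∀ {Y : C} (k : Y ⟶ A), rmap P k α = ⊤ ↔ rmap P k β = ⊤) : α = β :=
  le_antisymm (hC.le_of_forall_rmap_eq_top P hfull fun k => (h k).mp)
    (hC.le_of_forall_rmap_eq_top P hfull fun k => (h k).mpr)

lemma rmap_δ_eq_top_iff {hE : IsElementary P} (hcd : ComprehensiveDiagonals P hE)
    {Y A : C} (k : Y ⟶ A ⨯ A) :
    rmap P k (hE.δ A) = ⊤ ↔ k ≫ prod.fst = k ≫ prod.snd := by
  rw [hcd (k ≫ prod.fst) (k ≫ prod.snd), ← prod.comp_lift, prod.lift_fst_snd, Category.comp_id]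

lemma rmap_prodMap_δ_eq_top_iff {hE : IsElementary P} (hcd : ComprehensiveDiagonals P hE)
    {Y X A : C} (f : X ⟶ A) (k : Y ⟶ X ⨯ X) :
    rmap P k (rmap P (prod.map f f) (hE.δ A)) = ⊤ ↔ k ≫ prod.fst ≫ f = k ≫ prod.snd ≫ f := by
  rw [← rmap_comp, rmap_δ_eq_top_iff P hcd, Category.assoc, Category.assoc, prod.map_fst,
    prod.map_snd]

/-- In an elementary existential doctrine with full weak
comprehension and comprehensive diagonals (a variational doctrine), every
monomorphism of the base is `P`-injective. -/
theorem mono_PInj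
    (hP : IsExistential P) (hC : Comprehension P)
    (hfull : hC.Full P) (hcd : ComprehensiveDiagonals P hP.toIsElementary)
    {X A : C} (m : X ⟶ A) (hm : Mono m) :
    PInj P hP.toIsElementary m := by
  refine hC.eq_of_forall_rmap_eq_top_iff P hfull fun k => ?_
  rw [rmap_prodMap_δ_eq_top_iff P hcd, rmap_δ_eq_top_iff P hcd]
  simp only [← Category.assoc, cancel_mono]

end DoctrinePaper
end
end

section
/- Let P : C^op → InfSL be a primary doctrine and j a topology on P (a natural family of monotone maps j_A : P(A) → P(A) commuting with reindexing, with α ≤ j_A(α) and j_A(j_A(α)) = j_A(α)). Then if P is elementary, the doctrine P_j of j-closed elements (with P_j(A) = {α ∈ P(A) : j_A(α) = α}) is elementary, with fibered equality j_{A×A}(δ_A); and if P is existential, P_j is existential, with existential quantifiers given by ∃^j_f(α) = j(∃_f(α)). -/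
open CategoryTheory CategoryTheory.Limits Opposite

noncomputable section

universe w v u

namespace DoctrinePaper

variable {C : Type u} [Category.{v} C] [HasFiniteProducts C]

variable (P : Cᵒᵖ ⥤ SemilatInfCat.{w})

/-- A topology on a primary doctrine: a natural family of extensive, idempotent
inf-top-preserving maps commuting with reindexing. -/
structure DocTopology where
  j : ∀ {A : C}, Fib P A → Fib P A
  map_inf : ∀ {A : C} (α β : Fib P A), j (α ⊓ β) = j α ⊓ j β
  map_top : ∀ {A : C}, j (⊤ : Fib P A) = ⊤
  natural : ∀ {A B : C} (f : A ⟶ B) (β : Fib P B), rmap P f (j β) = j (rmap P f β)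
  le_j : ∀ {A : C} (α : Fib P A), α ≤ j α
  idem : ∀ {A : C} (α : Fib P A), j (j α) = j α

lemma rmap_mono (P : Cᵒᵖ ⥤ SemilatInfCat.{w}) {A B : C} (f : A ⟶ B)
    {x y : Fib P B} (h : x ≤ y) : rmap P f x ≤ rmap P f y :=
  OrderHomClass.mono (show InfTopHom _ _ from P.map f.op) h

lemma rmap_inf (P : Cᵒᵖ ⥤ SemilatInfCat.{w}) {A B : C} (f : A ⟶ B)
    (x y : Fib P B) : rmap P f (x ⊓ y) = rmap P f x ⊓ rmap P f y :=
  map_inf (show InfTopHom _ _ from P.map f.op) x y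

lemma DocTopology.mono {P : Cᵒᵖ ⥤ SemilatInfCat.{w}} (hT : DocTopology P)
    {A : C} {x y : Fib P A} (h : x ≤ y) : hT.j x ≤ hT.j y := by
  have : x ⊓ y = x := inf_eq_left.2 h
  calc hT.j x = hT.j (x ⊓ y) := by rw [this]
    _ = hT.j x ⊓ hT.j y := hT.map_inf x y
    _ ≤ hT.j y := inf_le_right

/-- If `P` is elementary, then the doctrine `P_j` of `j`-closed
elements is elementary with fibered equality `j (δ A)`; if `P` is existential,
then `P_j` is existential with `∃ʲ_f = j ∘ ∃_f`. -/
theorem closed_elements_elementary_existential (hT : DocTopology P) :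
    (∀ hE : IsElementary P,
      (∀ A : C, hT.j (hT.j (hE.δ A)) = hT.j (hE.δ A)) ∧
        ∀ (X A : C) (α : Fib P (X ⨯ A)) (β : Fib P ((X ⨯ A) ⨯ A)),
          hT.j α = α → hT.j β = β →
            ((rmap P (prod.fst : (X ⨯ A) ⨯ A ⟶ X ⨯ A) α ⊓
                rmap P (prod.lift (prod.fst ≫ prod.snd) prod.snd :
                  (X ⨯ A) ⨯ A ⟶ A ⨯ A) (hT.j (hE.δ A)) ≤ β)
              ↔ α ≤ rmap P (prod.lift (𝟙 (X ⨯ A)) prod.snd : X ⨯ A ⟶ (X ⨯ A) ⨯ A) β)) ∧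
    (∀ hEx : IsExistential P,
      (∀ {A B : C} (f : A ⟶ B) (α : Fib P A) (β : Fib P B), hT.j α = α → hT.j β = β →
        (hT.j (hEx.E f α) ≤ β ↔ α ≤ rmap P f β)) ∧
      (∀ {A B : C} (f : A ⟶ B) (α : Fib P A) (β : Fib P B), hT.j α = α → hT.j β = β →
        hT.j (hEx.E f (α ⊓ rmap P f β)) = hT.j (hEx.E f α) ⊓ β) ∧
      (∀ {B A A' : C} (f : A' ⟶ A) (β : Fib P (B ⨯ A)), hT.j β = β →
        hT.j (hEx.E (prod.snd : B ⨯ A' ⟶ A') (rmap P (prod.map (𝟙 B) f) β)) =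
          rmap P f (hT.j (hEx.E (prod.snd : B ⨯ A ⟶ A) β)))) := by
  constructor
  · intro hE
    refine ⟨fun A => hT.idem _, fun X A α β hα hβ => ?_⟩
    constructor
    · intro h
      apply (hE.adj X A α β).1
      refine le_trans (inf_le_inf_left _ ?_) h
      exact rmap_mono P _ (hT.le_j _)
    · intro h
      have h0 := (hE.adj X A α β).2 h
      have h1 := hT.mono h0
      rw [hT.map_inf] at h1
      rw [← hT.natural, ← hT.natural, hα, hβ] at h1
      exact h1
  · intro hEx
    refine ⟨fun {A B} f α β hα hβ => ?_, fun {A B} f α β hα hβ => ?_,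
      fun {B A A'} f β hβ => ?_⟩
    · rw [← hEx.adjE f α β]
      constructor
      · intro h; exact le_trans (hT.le_j _) h
      · intro h
        calc hT.j (hEx.E f α) ≤ hT.j β := hT.mono h
          _ = β := hβ
    · rw [hEx.frobenius f α β, hT.map_inf, hβ]
    · rw [hEx.beckChevalley f β, hT.natural]

end DoctrinePaper
end
end
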